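/- For a 2-form ω on M, the tangent lift satisfies ω_T = -(ω^♯)^* ω_can + τ(dω), where ω_can = -dθ_can is the canonical symplectic form on T^*M. In particular, if ω is closed then ω_T = -(ω^♯)^* ω_can, which is exact. -/

import Mathlib

/-- `k`-forms on `E` (as plain functions; multilinearity is a predicate). -/
abbrev Form (E : Type*) (k : ℕ) := E → (Fin k → E) → ℝ

variable {E : Type*} [NormedAddCommGroup E] [NormedSpace ℝ E] {k : ℕ}

noncomputable def extDeriv' (α : Form E k) : Form E (k + 1) :=
  fun x v => ∑ i : Fin (k + 1), (-1 : ℝ) ^ (i : ℕ) *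
    fderiv ℝ (fun y => α y (v ∘ i.succAbove)) x (v i)

noncomputable def tangentLift (α : Form E k) : Form (E × E) k :=
  fun p U => fderiv ℝ (fun y => α y (fun i => (U i).1)) p.1 p.2
    + ∑ i : Fin k, α p.1 (fun j => if j = i then (U i).2 else (U j).1)

/-- The operation `τ : Ω^{k+1}(M) → Ω^k(TM)`, `τ(α)_X = p_M^*(i_X α)`. -/
def tau (α : Form E (k + 1)) : Form (E × E) k :=
  fun p U => α p.1 (Fin.cons p.2 (fun i => (U i).1))

/-- Pullback of a form along a smooth map. -/
noncomputable def pb {F G : Type*} [NormedAddCommGroup F] [NormedSpace ℝ F]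
    [NormedAddCommGroup G] [NormedSpace ℝ G]
    (f : F → G) (α : Form G k) : Form F k :=
  fun x v => α (f x) (fun i => fderiv ℝ f x (v i))

/-- The canonical 1-form on `T^*M = E × (E →L[ℝ] ℝ)`. -/
def thetaCan : Form (E × (E →L[ℝ] ℝ)) 1 :=
  fun ξ U => ξ.2 (U 0).1

/-- The canonical symplectic form `ω_can = -d θ_can` on `T^*M`. -/
noncomputable def omegaCan : Form (E × (E →L[ℝ] ℝ)) 2 :=
  -(extDeriv' thetaCan)

section
variable {Ω : E → E →L[ℝ] E →L[ℝ] ℝ} (hΩ : ContDiff ℝ (⊤ : ℕ∞) Ω)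
include hΩ

lemma fd1 (a b x h : E) :
    fderiv ℝ (fun y => Ω y a b) x h = fderiv ℝ Ω x h a b := by
  have h1 : HasFDerivAt (fun y => Ω y a)
      ((Ω x).comp (0 : E →L[ℝ] E) + (fderiv ℝ Ω x).flip a) x :=
    (hΩ.differentiable (by simp) x).hasFDerivAt.clm_apply (hasFDerivAt_const a x)
  have h2 := h1.clm_apply (hasFDerivAt_const b x)
  rw [h2.fderiv]
  simp

lemma hOmega2 (p : E × E) :
    HasFDerivAt (fun X : E × E => Ω X.1 X.2)
      ((Ω p.1).comp (ContinuousLinearMap.snd ℝ E E)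
        + ((fderiv ℝ Ω p.1).comp (ContinuousLinearMap.fst ℝ E E)).flip p.2) p := by
  have hc : HasFDerivAt (fun X : E × E => Ω X.1)
      ((fderiv ℝ Ω p.1).comp (ContinuousLinearMap.fst ℝ E E)) p :=
    ((hΩ.differentiable (by simp) p.1).hasFDerivAt).comp p (hasFDerivAt_fst)
  exact hc.clm_apply (hasFDerivAt_snd)

lemma fd_sharp (p w : E × E) :
    fderiv ℝ (fun X : E × E => (X.1, Ω X.1 X.2)) p w
      = (w.1, fderiv ℝ Ω p.1 w.1 p.2 + Ω p.1 w.2) := by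
  have h := HasFDerivAt.prodMk (hasFDerivAt_fst (p := p)) (hOmega2 hΩ p)
  rw [h.fderiv]
  simp
  abel

lemma fd2 (a : E) (p w : E × E) :
    fderiv ℝ (fun X : E × E => Ω X.1 X.2 a) p w
      = fderiv ℝ Ω p.1 w.1 p.2 a + Ω p.1 w.2 a := by
  have h := (hOmega2 hΩ p).clm_apply (hasFDerivAt_const a p)
  rw [h.fderiv]
  simp
  ring

lemma fd3 (a b : E) (p w : E × E) :
    fderiv ℝ (fun X : E × E => Ω X.1 a b) p w = fderiv ℝ Ω p.1 w.1 a b := by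
  have h1 : HasFDerivAt (fun y : E => Ω y a b)
      (((Ω p.1 a).comp (0 : E →L[ℝ] E)) +
        (((Ω p.1).comp (0 : E →L[ℝ] E) + (fderiv ℝ Ω p.1).flip a)).flip b) p.1 := by
    have h0 : HasFDerivAt (fun y => Ω y a)
        ((Ω p.1).comp (0 : E →L[ℝ] E) + (fderiv ℝ Ω p.1).flip a) p.1 :=
      (hΩ.differentiable (by simp) p.1).hasFDerivAt.clm_apply (hasFDerivAt_const a p.1)
    exact h0.clm_apply (hasFDerivAt_const b p.1)
  have h := h1.comp p (hasFDerivAt_fst (p := p))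
  rw [show (fun X : E × E => Ω X.1 a b) = ((fun y : E => Ω y a b) ∘ Prod.fst) from rfl, h.fderiv]
  simp

omit hΩ in
lemma fd_theta (a : E) (ξ w : E × (E →L[ℝ] ℝ)) :
    fderiv ℝ (fun y : E × (E →L[ℝ] ℝ) => y.2 a) ξ w = w.2 a := by
  have h := (hasFDerivAt_snd (p := ξ)).clm_apply (hasFDerivAt_const a ξ)
  rw [h.fderiv]
  simp
end

/-- `ω_T = -(ω^♯)^* ω_can + τ(dω)`; in particular, if `ω` is
closed then `ω_T = -(ω^♯)^* ω_can` is exact. -/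
theorem tangentLift_two_form_eq
    (Ω : E → E →L[ℝ] E →L[ℝ] ℝ)
    (hskew : ∀ x u v, Ω x u v = - Ω x v u)
    (hΩ : ContDiff ℝ (⊤ : ℕ∞) Ω) :
    tangentLift (k := 2) (fun x v => Ω x (v 0) (v 1))
        = -(pb (fun X : E × E => (X.1, Ω X.1 X.2)) omegaCan)
          + tau (extDeriv' (k := 2) (fun x v => Ω x (v 0) (v 1))) ∧
      (extDeriv' (k := 2) (fun x v => Ω x (v 0) (v 1)) = 0 →
        tangentLift (k := 2) (fun x v => Ω x (v 0) (v 1))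
            = -(pb (fun X : E × E => (X.1, Ω X.1 X.2)) omegaCan) ∧
          ∃ β : Form (E × E) 1,
            tangentLift (k := 2) (fun x v => Ω x (v 0) (v 1)) = extDeriv' β) := by
  have key : tangentLift (k := 2) (fun x v => Ω x (v 0) (v 1))
      = -(pb (fun X : E × E => (X.1, Ω X.1 X.2)) omegaCan)
        + tau (extDeriv' (k := 2) (fun x v => Ω x (v 0) (v 1))) := by
      funext p U
      simp only [tangentLift, pb, tau, extDeriv', omegaCan, thetaCan, Pi.add_apply, Pi.neg_apply,
        Fin.sum_univ_succ, Fin.sum_univ_zero, Function.comp,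
        Fin.succAbove_zero, Fin.zero_succAbove, Fin.succ_succAbove_zero, Fin.succ_succAbove_succ,
        Fin.cons_zero, Fin.cons_succ, Fin.succ_zero_eq_one, Fin.succ_one_eq_two,
        pow_succ, pow_zero, if_true, if_pos, Fin.isValue]
      norm_num
      rw [show ((2:Fin 3).succAbove 1) = ((1:Fin 3)) from rfl,
        show (Fin.cons p.2 (fun i => (U i).1) : Fin 3 → E) 1 = (U 0).1 from rfl,
        show (Fin.cons p.2 (fun i => (U i).1) : Fin 3 → E) 2 = (U 1).1 from rfl]
      rw [fd_theta, fd_theta, fd_sharp hΩ, fd_sharp hΩ, fd1 hΩ, fd1 hΩ, fd1 hΩ]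
      simp only [ContinuousLinearMap.add_apply]
      rw [hskew p.1 (U 0).1 (U 1).2]
      ring
  refine ⟨key, fun hcl => ?_⟩
  have h0 : tau (extDeriv' (k := 2) (fun x v => Ω x (v 0) (v 1))) = (0 : Form (E × E) 2) := by
    rw [hcl]; funext p U; simp [tau]
  have main2 : tangentLift (k := 2) (fun x v => Ω x (v 0) (v 1))
      = -(pb (fun X : E × E => (X.1, Ω X.1 X.2)) omegaCan) := by
    rw [key, h0, add_zero]
  refine ⟨main2, ⟨fun (p : E × E) (U : Fin 1 → E × E) => Ω p.1 p.2 ((U 0).1), ?_⟩⟩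
  have hd : ∀ (x u a b : E), fderiv ℝ Ω x u a b - fderiv ℝ Ω x a u b + fderiv ℝ Ω x b u a = 0 := by
    intro x u a b
    have h := congrFun (congrFun hcl x) ![u, a, b]
    simp only [extDeriv', Fin.sum_univ_succ, Fin.sum_univ_zero, Function.comp,
      Fin.succAbove_zero, Fin.zero_succAbove, Fin.succ_succAbove_zero, Fin.succ_succAbove_succ,
      Fin.succ_zero_eq_one, Fin.succ_one_eq_two, pow_succ, pow_zero, Fin.isValue,
      Matrix.cons_val_zero, Matrix.cons_val_one, Matrix.head_cons, Pi.zero_apply,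
      show ![u, a, b] 2 = b from rfl] at h
    rw [show ((2:Fin 3).succAbove 1) = ((1:Fin 3)) from rfl,
      show ((1:Fin 3).succAbove 1) = ((2:Fin 3)) from rfl] at h
    simp only [Matrix.cons_val_one, Matrix.head_cons,
      show ![u, a, b] 2 = b from rfl] at h
    norm_num at h
    rw [fd1 hΩ, fd1 hΩ, fd1 hΩ] at h
    linarith [h]
  funext p V
  simp only [tangentLift, extDeriv', Fin.sum_univ_succ, Fin.sum_univ_zero, Function.comp,
    Fin.succAbove_zero, Fin.zero_succAbove, Fin.succ_succAbove_zero, Fin.succ_succAbove_succ,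
    Fin.succ_zero_eq_one, Fin.succ_one_eq_two, pow_succ, pow_zero, if_true, if_pos, Fin.isValue]
  norm_num
  rw [fd1 hΩ, fd2 hΩ, fd2 hΩ]
  have := hd p.1 p.2 (V 0).1 (V 1).1
  rw [hskew p.1 (V 0).1 (V 1).2]
  linarith
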